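/- Fix a natural number P ≥ 1 and positive reals T, n. For all positive reals L₁,...,L_P, max(L₁, L₂/(n√L₁), L₃/(n√L₂), ..., L_P/(n√L_{P-1}), T/(n√L_P)) ≥ n^{(2-2^{P+1})/(2^{P+1}-1)} · T^{2^P/(2^{P+1}-1)}. -/

import Mathlib

/-!
Let `M` be the maximum. Every bound `L_{p+1} ≤ M n √L_p` turns a bound `L_p ≤ n^a M^b` into
`L_{p+1} ≤ n^{1+a/2} M^{1+b/2}`, so starting from `L₁ ≤ M` one gets
`L_P ≤ n^{2-4/2^P} M^{2-2/2^P}`, and the last term gives `T ≤ n^{2-2/2^P} M^{2-1/2^P}`.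
Solving this for `M` is the claim.
-/

open Real

lemma sqrt_rpow_mul_rpow {n M : ℝ} (hn : 0 ≤ n) (hM : 0 ≤ M) (a b : ℝ) :
    √(n ^ a * M ^ b) = n ^ (a / 2) * M ^ (b / 2) := by
  rw [sqrt_eq_rpow, mul_rpow (by positivity) (by positivity), ← rpow_mul hn, ← rpow_mul hM,
    mul_one_div, mul_one_div]

lemma le_rpow_mul_rpow_of_le_mul_sqrt {n M x y a b : ℝ} (hn : 0 < n) (hM : 0 < M)
    (hx : x ≤ n ^ a * M ^ b) (hy : y ≤ M * (n * √x)) :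
    y ≤ n ^ (1 + a / 2) * M ^ (1 + b / 2) :=
  calc y ≤ M * (n * √(n ^ a * M ^ b)) := hy.trans (by gcongr)
    _ = n ^ (1 + a / 2) * M ^ (1 + b / 2) := by
      rw [sqrt_rpow_mul_rpow hn.le hM.le, rpow_add hn, rpow_add hM, rpow_one, rpow_one]
      ring

lemma le_rpow_mul_rpow_of_sqrt_recurrence {n M : ℝ} (hn : 0 < n) (hM : 0 < M) {L : ℕ → ℝ}
    {P : ℕ} (h₁ : L 1 ≤ M) (hstep : ∀ p, 1 ≤ p → p < P → L (p + 1) ≤ M * (n * √(L p))) :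
    ∀ p, 1 ≤ p → p ≤ P → L p ≤ n ^ (2 - 4 / 2 ^ p : ℝ) * M ^ (2 - 2 / 2 ^ p : ℝ) := by
  intro p hp
  induction p, hp using Nat.le_induction with
  | base => intro; norm_num [h₁]
  | succ p hp ih =>
    intro hpP
    convert le_rpow_mul_rpow_of_le_mul_sqrt hn hM (ih (by omega)) (hstep p hp hpP) using 3 <;>
      (rw [pow_succ]; field_simp; ring)

lemma rpow_mul_rpow_le_of_le_rpow_mul_rpow {n M T c d : ℝ} (hn : 0 < n) (hM : 0 ≤ M)
    (hT : 0 ≤ T) (hd : 0 < d) (h : T ≤ n ^ c * M ^ d) :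
    n ^ (-c / d) * T ^ d⁻¹ ≤ M := by
  have : T ^ d⁻¹ ≤ n ^ (c / d) * M := by
    calc T ^ d⁻¹ ≤ (n ^ c * M ^ d) ^ d⁻¹ := by gcongr
      _ = n ^ (c / d) * M := by
        rw [mul_rpow (by positivity) (by positivity), ← rpow_mul hn.le, ← rpow_mul hM,
          mul_inv_cancel₀ hd.ne', rpow_one, div_eq_mul_inv]
  calc n ^ (-c / d) * T ^ d⁻¹ ≤ n ^ (-c / d) * (n ^ (c / d) * M) := by gcongr
    _ = M := by rw [← mul_assoc, ← rpow_add hn, neg_div, neg_add_cancel, rpow_zero, one_mul]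

/-- General `P`-pass balancing: the maximum of `L₁`, the terms
`L_{p+1}/(n √(L_p))` for `p = 1, …, P-1`, and `T/(n √(L_P))` is at least
`n^{(2-2^{P+1})/(2^{P+1}-1)} · T^{2^P/(2^{P+1}-1)}`. -/
theorem stmt_13 (P : ℕ) (hP : 1 ≤ P) (n T : ℝ) (hn : 0 < n) (hT : 0 < T)
    (L : ℕ → ℝ) (hL : ∀ p, 1 ≤ p → p ≤ P → 0 < L p) :
    n ^ ((2 - (2 : ℝ) ^ (P + 1)) / ((2 : ℝ) ^ (P + 1) - 1)) *
        T ^ ((2 : ℝ) ^ P / ((2 : ℝ) ^ (P + 1) - 1)) ≤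
      max ((Finset.range P).sup' (Finset.nonempty_range_iff.mpr (by omega))
          (fun p => if p = 0 then L 1 else L (p + 1) / (n * Real.sqrt (L p))))
        (T / (n * Real.sqrt (L P))) := by
  set M := max ((Finset.range P).sup' (Finset.nonempty_range_iff.mpr (by omega))
          (fun p => if p = 0 then L 1 else L (p + 1) / (n * Real.sqrt (L p))))
        (T / (n * Real.sqrt (L P)))
  have hterm {p : ℕ} (hp : p < P) :
      (if p = 0 then L 1 else L (p + 1) / (n * √(L p))) ≤ M :=
    (Finset.le_sup' (fun p => if p = 0 then L 1 else L (p + 1) / (n * √(L p)))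
      (Finset.mem_range.mpr hp)).trans (le_max_left _ _)
  have h₁ : L 1 ≤ M := by simpa using hterm (p := 0) (by omega)
  have hM : 0 < M := (hL 1 le_rfl hP).trans_le h₁
  have hstep (p : ℕ) (hp : 1 ≤ p) (hpP : p < P) : L (p + 1) ≤ M * (n * √(L p)) := by
    have hLp := hL p hp hpP.le
    have := hterm hpP
    rwa [if_neg (by omega), div_le_iff₀ (by positivity)] at this
  have hTM : T ≤ M * (n * √(L P)) :=
    (div_le_iff₀ (by have := hL P hP le_rfl; positivity)).mp (le_max_right _ _)
  have hLP := le_rpow_mul_rpow_of_sqrt_recurrence hn hM h₁ hstep P hP le_rfl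
  have h2P : (1 : ℝ) ≤ 2 ^ P := one_le_pow₀ one_le_two
  have hd : (0 : ℝ) < 1 + (2 - 2 / 2 ^ P) / 2 := by
    have : 2 / (2 : ℝ) ^ P ≤ 2 := div_le_self zero_le_two h2P
    linarith
  have key := rpow_mul_rpow_le_of_le_rpow_mul_rpow hn hM.le hT.le hd
    (le_rpow_mul_rpow_of_le_mul_sqrt hn hM hLP hTM)
  convert key using 3 <;> (rw [pow_succ]; field_simp; ring)
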